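/- arXiv:hep-ph/9401311 — 2 statements merged into one kernel-verified Lean document; each statement's English description precedes it below -/
import Mathlib

section
/- Let U be an n×n unitary complex matrix with nonzero entries in its first column, and suppose the rows are indexed by n 'fermion-type' labels k = 1,...,n (each fermion type coupling to exactly one doublet, m = n). Define X_i^k = U_{ki}/U_{k1}. If a > 0 is such that |X_i^k| > a for some fixed i ∈ {2,...,n} and all k, then a < √(n−1). -/
/-!
Columns of a unitary matrix are unit vectors. If |U_{ki}| > a |U_{k1}| for every row k, summing
the squares over k compares the i-th and the first column and gives 1 > a², so a < 1 ≤ √(n - 1).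
-/

open Finset

theorem Matrix.sum_norm_sq_col_of_mem_unitaryGroup {𝕜 n : Type*} [RCLike 𝕜] [Fintype n]
    [DecidableEq n] {U : Matrix n n 𝕜} (hU : U ∈ Matrix.unitaryGroup n 𝕜) (j : n) :
    ∑ k, ‖U k j‖ ^ 2 = 1 := by
  have hdiag : (star U * U) j j = 1 := by rw [Unitary.star_mul_self_of_mem hU, one_apply_eq]
  simp only [mul_apply, star_apply, RCLike.star_def, RCLike.conj_mul] at hdiag
  exact_mod_cast hdiag

theorem mul_norm_lt_of_lt_norm_div {K : Type*} [NormedDivisionRing K] {a : ℝ} (ha : 0 < a)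
    {x y : K} (h : a < ‖x / y‖) : a * ‖y‖ < ‖x‖ := by
  rcases eq_or_ne y 0 with rfl | hy
  · simp only [div_zero, norm_zero] at h
    exact absurd h ha.not_gt
  · rwa [norm_div, lt_div_iff₀ (norm_pos_iff.mpr hy)] at h

theorem lt_one_of_forall_mul_norm_lt {ι E : Type*} [Fintype ι] [Nonempty ι]
    [SeminormedAddGroup E] {x y : ι → E} (hx : ∑ k, ‖x k‖ ^ 2 = 1) (hy : ∑ k, ‖y k‖ ^ 2 = 1)
    {a : ℝ} (ha : 0 ≤ a) (h : ∀ k, a * ‖y k‖ < ‖x k‖) : a < 1 := by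
  have hsq : a ^ 2 * ∑ k, ‖y k‖ ^ 2 < ∑ k, ‖x k‖ ^ 2 := by
    rw [mul_sum]
    refine sum_lt_sum_of_nonempty univ_nonempty fun k _ => ?_
    rw [← mul_pow]
    exact pow_lt_pow_left₀ (h k) (by positivity) two_ne_zero
  rw [hx, hy, mul_one] at hsq
  exact (pow_lt_one_iff_of_nonneg ha two_ne_zero).mp hsq

theorem stmt_2_general (n : ℕ) (U : Matrix (Fin (n + 1)) (Fin (n + 1)) ℂ)
    (hU : U ∈ Matrix.unitaryGroup (Fin (n + 1)) ℂ)
    (i : Fin (n + 1)) (hi : i ≠ 0)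
    (a : ℝ) (ha : 0 < a)
    (hbig : ∀ k : Fin (n + 1), a < ‖U k i / U k 0‖) :
    a < Real.sqrt ((n + 1 : ℝ) - 1) := by
  have ha1 : a < 1 :=
    lt_one_of_forall_mul_norm_lt (Matrix.sum_norm_sq_col_of_mem_unitaryGroup hU i)
      (Matrix.sum_norm_sq_col_of_mem_unitaryGroup hU 0) ha.le
      fun k => mul_norm_lt_of_lt_norm_div ha (hbig k)
  have hn : (1 : ℝ) ≤ n := by
    rcases n with _ | n
    · exact absurd (Fin.fin_one_eq_zero i) hi
    · exact_mod_cast n.succ_pos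
  calc a < 1 := ha1
    _ ≤ Real.sqrt ((n + 1 : ℝ) - 1) := by
      rw [add_sub_cancel_right, Real.one_le_sqrt]
      exact hn

/-- If every coupling |X_i^k| = |U_{ki}/U_{k1}| exceeds a > 0 for a fixed column
i ≠ 1 and all rows k of an (n+1)×(n+1) unitary matrix, then a < √n. -/
theorem stmt_2 (n : ℕ) (U : Matrix (Fin (n + 1)) (Fin (n + 1)) ℂ)
    (hU : U ∈ Matrix.unitaryGroup (Fin (n + 1)) ℂ)
    (h0 : ∀ k : Fin (n + 1), U k 0 ≠ 0)
    (i : Fin (n + 1)) (hi : i ≠ 0)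
    (a : ℝ) (ha : 0 < a)
    (hbig : ∀ k : Fin (n + 1), a < ‖U k i / U k 0‖) :
    a < Real.sqrt ((n + 1 : ℝ) - 1) :=
  stmt_2_general n U hU i hi a ha hbig
end

section
/- The interference phase-space function F_ps^int(x) = 1 + 9x − 9x² − x³ + 6x(1+x)·ln(x) satisfies F_ps^int(x) > 0 for all x ∈ (0,1), with F_ps^int(1) = 0 and lim_{x→0⁺} F_ps^int(x) = 1. -/
/-!
The derivatives of `F x = 1 + 9x - 9x² - x³ + 6x(1 + x) ln x` are
`F' x = 15 - 12x - 3x² + 6(1 + 2x) ln x`, `F'' x = 12 ln x + 6/x - 6x` and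
`F''' x = -6(1 - x)²/x²`. Since `F`, `F'` and `F''` all vanish at `1`, reading the signs downwards
from `F''' < 0` on `(0, 1)` gives `F'' > 0`, then `F' < 0`, then `F > 0` there. With Mathlib's
convention `log 0 = 0`, the function `x ln x` is continuous on all of `ℝ`, so `F` is continuous
and its limit at `0⁺` is `F 0 = 1`.
-/

open Real Filter Set Topology

theorem pos_of_hasDerivAt_neg_of_right_eq_zero {f f' : ℝ → ℝ} {a b : ℝ}
    (hf : ∀ x ∈ Ioc a b, HasDerivAt f (f' x) x) (hf' : ∀ x ∈ Ioo a b, f' x < 0) (hb : f b = 0)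
    {x : ℝ} (hx : x ∈ Ioo a b) : 0 < f x := by
  have hanti : StrictAntiOn f (Ioc a b) :=
    strictAntiOn_of_hasDerivWithinAt_neg (convex_Ioc a b)
      (fun y hy => (hf y hy).continuousAt.continuousWithinAt)
      (fun y hy => (hf y (interior_subset hy)).hasDerivWithinAt)
      (by rwa [interior_Ioc])
  simpa [hb] using hanti (Ioo_subset_Ioc_self hx) (right_mem_Ioc.2 (hx.1.trans hx.2)) hx.2

theorem neg_of_hasDerivAt_pos_of_right_eq_zero {f f' : ℝ → ℝ} {a b : ℝ}
    (hf : ∀ x ∈ Ioc a b, HasDerivAt f (f' x) x) (hf' : ∀ x ∈ Ioo a b, 0 < f' x) (hb : f b = 0)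
    {x : ℝ} (hx : x ∈ Ioo a b) : f x < 0 := by
  have := pos_of_hasDerivAt_neg_of_right_eq_zero (f := -f) (f' := -f')
    (fun y hy => (hf y hy).neg) (fun y hy => neg_neg_iff_pos.2 (hf' y hy)) (by simp [hb]) hx
  simpa using this

namespace PhaseSpaceInt

noncomputable def F (x : ℝ) : ℝ := 1 + 9 * x - 9 * x ^ 2 - x ^ 3 + 6 * x * (1 + x) * log x

noncomputable def F' (x : ℝ) : ℝ := 15 - 12 * x - 3 * x ^ 2 + 6 * (1 + 2 * x) * log x

noncomputable def F'' (x : ℝ) : ℝ := 12 * log x + 6 / x - 6 * x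

theorem hasDerivAt_F {x : ℝ} (hx : x ≠ 0) : HasDerivAt F (F' x) x := by
  have h := ((((hasDerivAt_id' x).const_mul 9).const_add 1).fun_sub
    (((hasDerivAt_id' x).fun_pow 2).const_mul 9)).fun_sub ((hasDerivAt_id' x).fun_pow 3) |>.fun_add
    ((((hasDerivAt_id' x).const_mul 6).fun_mul ((hasDerivAt_id' x).const_add 1)).fun_mul
      (hasDerivAt_log hx))
  refine h.congr_deriv ?_
  simp only [F']
  field_simp
  ring

theorem hasDerivAt_F' {x : ℝ} (hx : x ≠ 0) : HasDerivAt F' (F'' x) x := by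
  have h := ((((hasDerivAt_id' x).const_mul 12).const_sub 15).fun_sub
    (((hasDerivAt_id' x).fun_pow 2).const_mul 3)).fun_add
    ((((hasDerivAt_id' x).const_mul 2).const_add 1).const_mul 6 |>.fun_mul (hasDerivAt_log hx))
  refine h.congr_deriv ?_
  simp only [F'']
  field_simp
  ring

theorem hasDerivAt_F'' {x : ℝ} (hx : x ≠ 0) :
    HasDerivAt F'' (-(6 * (1 - x) ^ 2 / x ^ 2)) x := by
  have h := (((hasDerivAt_log hx).const_mul 12).fun_add
    ((hasDerivAt_inv hx).const_mul 6)).fun_sub ((hasDerivAt_id' x).const_mul 6)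
  refine h.congr_deriv ?_
  field_simp
  ring

theorem F''_pos {x : ℝ} (hx : x ∈ Ioo 0 1) : 0 < F'' x :=
  pos_of_hasDerivAt_neg_of_right_eq_zero (fun y hy => hasDerivAt_F'' hy.1.ne')
    (fun y hy => neg_neg_iff_pos.2 <|
      div_pos (mul_pos (by norm_num) (pow_pos (sub_pos.2 hy.2) 2)) (pow_pos hy.1 2))
    (by norm_num [F'']) hx

theorem F'_neg {x : ℝ} (hx : x ∈ Ioo 0 1) : F' x < 0 :=
  neg_of_hasDerivAt_pos_of_right_eq_zero (fun y hy => hasDerivAt_F' hy.1.ne')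
    (fun _ hy => F''_pos hy) (by norm_num [F']) hx

theorem F_pos {x : ℝ} (hx : x ∈ Ioo 0 1) : 0 < F x :=
  pos_of_hasDerivAt_neg_of_right_eq_zero (fun y hy => hasDerivAt_F hy.1.ne')
    (fun _ hy => F'_neg hy) (by norm_num [F]) hx

theorem continuous_F : Continuous F := by
  have hF : F = fun x => 1 + 9 * x - 9 * x ^ 2 - x ^ 3 + 6 * (1 + x) * (x * log x) := by
    ext x
    simp only [F]
    ring
  have := continuous_mul_log
  rw [hF]
  fun_prop

theorem tendsto_F_zero : Tendsto F (𝓝[>] 0) (𝓝 1) := by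
  have h : F 0 = 1 := by norm_num [F]
  exact h ▸ continuous_F.continuousAt.tendsto.mono_left nhdsWithin_le_nhds

end PhaseSpaceInt

/-- The interference phase-space function F_ps^int(x) = 1 + 9x - 9x² - x³
+ 6x(1+x) ln x is positive on (0,1), vanishes at 1, and tends to 1 at 0⁺. -/
theorem stmt_13 :
    (∀ x ∈ Set.Ioo (0 : ℝ) 1,
      0 < 1 + 9 * x - 9 * x ^ 2 - x ^ 3 + 6 * x * (1 + x) * Real.log x) ∧
    (1 + 9 * (1 : ℝ) - 9 * 1 ^ 2 - 1 ^ 3 + 6 * 1 * (1 + 1) * Real.log 1) = 0 ∧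
    Tendsto
      (fun x : ℝ => 1 + 9 * x - 9 * x ^ 2 - x ^ 3 + 6 * x * (1 + x) * Real.log x)
      (nhdsWithin 0 (Set.Ioi 0)) (nhds 1) :=
  ⟨fun _ hx => PhaseSpaceInt.F_pos hx, by norm_num, PhaseSpaceInt.tendsto_F_zero⟩
end
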